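/- Let μ > 0, A ∈ ℝ^{m×n}, Q = μI + [[0, Aᵀ],[−A, 0]], and write G_new = −I + L + U where L and U are the strictly lower and strictly upper triangular parts of G_new = [[−I, I],[0, −Q/μ]]. For step size α > 0 define Ĝ = [(1+α)I − αL]⁻¹(I + αU). If 0 < α ≤ 2μ/‖A‖, then the spectral radius of Ĝ equals 1/(1+α). -/

import Mathlib

open Matrix

/-- The matrix `Q = μI + [[0, Aᵀ],[−A, 0]]` of the quadratic game. -/
noncomputable def Qgame {n m : ℕ} (μ : ℝ) (A : Matrix (Fin m) (Fin n) ℝ) :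
    Matrix (Fin n ⊕ Fin m) (Fin n ⊕ Fin m) ℝ :=
  μ • (1 : Matrix (Fin n ⊕ Fin m) (Fin n ⊕ Fin m) ℝ) + Matrix.fromBlocks 0 Aᵀ (-A) 0

/-- The strictly lower triangular part `L` of `G_new = [[−I, I],[0, −Q/μ]]`. -/
noncomputable def GnewLower {n m : ℕ} (μ : ℝ) (A : Matrix (Fin m) (Fin n) ℝ) :
    Matrix ((Fin n ⊕ Fin m) ⊕ (Fin n ⊕ Fin m)) ((Fin n ⊕ Fin m) ⊕ (Fin n ⊕ Fin m)) ℝ :=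
  Matrix.fromBlocks 0 0 0 (Matrix.fromBlocks 0 0 (μ⁻¹ • A) 0)

/-- The strictly upper triangular part `U` of `G_new = [[−I, I],[0, −Q/μ]]`. -/
noncomputable def GnewUpper {n m : ℕ} (μ : ℝ) (A : Matrix (Fin m) (Fin n) ℝ) :
    Matrix ((Fin n ⊕ Fin m) ⊕ (Fin n ⊕ Fin m)) ((Fin n ⊕ Fin m) ⊕ (Fin n ⊕ Fin m)) ℝ :=
  Matrix.fromBlocks 0 1 0 (Matrix.fromBlocks 0 (-(μ⁻¹ • Aᵀ)) 0 0)

/-- The spectral (ℓ²-operator) norm of a real matrix. -/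
noncomputable def matSpectralNorm {n m : ℕ} (A : Matrix (Fin m) (Fin n) ℝ) : ℝ :=
  ‖LinearMap.toContinuousLinearMap (Matrix.toEuclideanLin A)‖

/-! An eigenpair `(λ, v)` of `Ĝ` solves `(I + αU) v = λ ((1 + α) I - α L) v`. Writing
`v = (p, q₁, q₂)` and `w = λ (1 + α)`, the last two block rows read
`(1 - w) q₁ = (α/μ) Aᵀ q₂` and `(1 - w) q₂ = -λ (α/μ) A q₁`, whence
`(1 - w)² ‖q₁‖² + w T = 0` with `T = (α/μ)² ‖A q₁‖² / (1 + α)`. The step-size bound gives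
`0 ≤ T ≤ 4 ‖q₁‖²`, so for `q₁ ≠ 0` this quadratic in `w` has non-positive discriminant and
roots of product one: both lie on the unit circle. So `|λ| > 1/(1 + α)` forces `q₁ = 0`,
then `q₂ = 0` and `p = 0`; on the other hand every vector supported on the `p`-block is an
eigenvector for `1/(1 + α)`. -/

theorem Sum.smul_elim {α β M R : Type*} [SMul R M] (r : R) (f : α → M) (g : β → M) :
    r • Sum.elim f g = Sum.elim (r • f) (r • g) := by
  ext (i | i) <;> rfl

theorem Matrix.mem_spectrum_iff_exists_mulVec_eq_smul {ι K : Type*} [Fintype ι] [DecidableEq ι]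
    [Field K] (M : Matrix ι ι K) (l : K) :
    l ∈ spectrum K M ↔ ∃ v ≠ 0, M *ᵥ v = l • v := by
  rw [← Matrix.spectrum_toLin', ← Module.End.hasEigenvalue_iff_mem_spectrum]
  constructor
  · intro h
    obtain ⟨v, hv⟩ := h.exists_hasEigenvector
    exact ⟨v, hv.2, hv.apply_eq_smul⟩
  · rintro ⟨v, hv0, hv⟩
    exact Module.End.hasEigenvalue_of_hasEigenvector
      (Module.End.hasEigenvector_iff.2 ⟨Module.End.mem_eigenspace_iff.2 hv, hv0⟩)

theorem Matrix.spectralRadius_eq_of_eigenvectors {ι : Type*} [Fintype ι] [DecidableEq ι]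
    (M : Matrix ι ι ℂ) {r : ℝ} (hr : 0 ≤ r)
    (hbound : ∀ (l : ℂ) (v : ι → ℂ), M *ᵥ v = l • v → r < ‖l‖ → v = 0)
    {v : ι → ℂ} (hv : v ≠ 0) (hMv : M *ᵥ v = (r : ℂ) • v) :
    spectralRadius ℂ M = ENNReal.ofReal r := by
  apply le_antisymm
  · refine iSup₂_le fun l hl => ?_
    obtain ⟨w, hw0, hw⟩ := (M.mem_spectrum_iff_exists_mulVec_eq_smul l).1 hl
    rw [← enorm_eq_nnnorm, ← ofReal_norm]
    exact ENNReal.ofReal_le_ofReal (not_lt.1 fun h => hw0 (hbound l w hw h))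
  · have hmem : (r : ℂ) ∈ spectrum ℂ M :=
      (M.mem_spectrum_iff_exists_mulVec_eq_smul _).2 ⟨v, hv, hMv⟩
    calc ENNReal.ofReal r = ‖(r : ℂ)‖₊ := by
          rw [← enorm_eq_nnnorm, ← ofReal_norm, Complex.norm_real, Real.norm_of_nonneg hr]
      _ ≤ spectralRadius ℂ M :=
          le_iSup₂ (f := fun l (_ : l ∈ spectrum ℂ M) => (‖l‖₊ : ENNReal)) _ hmem

theorem Matrix.map_nonsing_inv_mul_mulVec_eq_smul_iff {ι R S : Type*} [Fintype ι] [DecidableEq ι]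
    [CommRing R] [CommRing S] (f : R →+* S) {M : Matrix ι ι R} (hM : IsUnit M.det)
    (W : Matrix ι ι R) (v : ι → S) (l : S) :
    (M⁻¹ * W).map f *ᵥ v = l • v ↔ W.map f *ᵥ v = l • (M.map f *ᵥ v) := by
  have hinv_mul : M⁻¹.map f * M.map f = 1 := by
    rw [← Matrix.map_mul, nonsing_inv_mul _ hM, Matrix.map_one _ f.map_zero f.map_one]
  have hmul_inv : M.map f * M⁻¹.map f = 1 := by
    rw [← Matrix.map_mul, mul_nonsing_inv _ hM, Matrix.map_one _ f.map_zero f.map_one]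
  rw [Matrix.map_mul, ← mulVec_mulVec]
  constructor
  · intro h
    rw [← one_mulVec (W.map f *ᵥ v), ← hmul_inv, ← mulVec_mulVec, h, mulVec_smul]
  · intro h
    rw [h, mulVec_smul, mulVec_mulVec, hinv_mul, one_mulVec]

theorem eq_zero_of_eq_smul_of_ne_one {K E : Type*} [Field K] [AddCommGroup E] [Module K E]
    {x : E} {w : K} (hw : w ≠ 1) (h : x = w • x) : x = 0 :=
  (smul_eq_zero.1 (by rw [sub_smul, one_smul, ← h, sub_self] : (1 - w) • x = 0)).resolve_left
    (sub_ne_zero.2 hw.symm)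

theorem norm_le_one_of_sq_mul_add_mul_eq_zero {w : ℂ} {N T : ℝ} (hN : 0 < N) (hT : 0 ≤ T)
    (hT4 : T ≤ 4 * N) (h : (1 - w) ^ 2 * N + w * T = 0) : ‖w‖ ≤ 1 := by
  obtain ⟨a, b⟩ := w
  have hre : ((1 - a) ^ 2 - b ^ 2) * N + T * a = 0 := by
    have := congrArg Complex.re h
    simp [sq] at this
    linear_combination this
  have him : b * (T - 2 * (1 - a) * N) = 0 := by
    have := congrArg Complex.im h
    simp [sq] at this
    linear_combination this
  rw [← sq_le_one_iff₀ (norm_nonneg _), Complex.sq_norm, Complex.normSq_mk]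
  rcases mul_eq_zero.1 him with rfl | hT'
  · -- multiply `N (1 - a)² = -T a` by `N (1 + a)² = (4N - T) a`
    have hsq : (N * (1 - a ^ 2)) ^ 2 ≤ 0 := by
      rw [show (N * (1 - a ^ 2)) ^ 2 = -(T * (4 * N - T)) * a ^ 2 by
        linear_combination (N * (1 + a) ^ 2 - T * a) * hre]
      exact mul_nonpos_of_nonpos_of_nonneg (neg_nonpos.2 (mul_nonneg hT (by linarith)))
        (sq_nonneg a)
    have := (mul_eq_zero.1 (pow_eq_zero_iff two_ne_zero |>.1
      (le_antisymm hsq (sq_nonneg _)))).resolve_left hN.ne'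
    nlinarith
  · nlinarith

theorem star_dotProduct_self_eq_sum_normSq {ι : Type*} [Fintype ι] (x : ι → ℂ) :
    star x ⬝ᵥ x = ((∑ i, Complex.normSq (x i) : ℝ) : ℂ) := by
  simp [dotProduct, Complex.normSq_eq_conj_mul_self]

theorem sq_mul_star_dotProduct_self_eq {ι κ : Type*} [Fintype ι] [Fintype κ] (B : Matrix κ ι ℂ)
    {q₁ : ι → ℂ} {q₂ : κ → ℂ} {s a d : ℂ}
    (h₁ : s • q₁ = a • Bᴴ *ᵥ q₂) (h₂ : s • q₂ = -d • B *ᵥ q₁) :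
    s ^ 2 * (star q₁ ⬝ᵥ q₁) = -(a * d) * (star (B *ᵥ q₁) ⬝ᵥ B *ᵥ q₁) := by
  calc s ^ 2 * (star q₁ ⬝ᵥ q₁) = s * (star q₁ ⬝ᵥ s • q₁) := by
        rw [dotProduct_smul, smul_eq_mul]; ring
    _ = a * (star (B *ᵥ q₁) ⬝ᵥ s • q₂) := by
        rw [h₁, dotProduct_smul, dotProduct_mulVec, ← star_mulVec, dotProduct_smul, smul_eq_mul,
          smul_eq_mul]
        ring
    _ = -(a * d) * (star (B *ᵥ q₁) ⬝ᵥ B *ᵥ q₁) := by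
        rw [h₂, dotProduct_smul, smul_eq_mul]; ring

section SpectralNorm

variable {n m : ℕ} (A : Matrix (Fin m) (Fin n) ℝ)

theorem matSpectralNorm_nonneg : 0 ≤ matSpectralNorm A :=
  norm_nonneg _

theorem nonempty_of_matSpectralNorm_pos (hA : 0 < matSpectralNorm A) : Nonempty (Fin n) := by
  by_contra h
  have : IsEmpty (Fin n) := not_nonempty_iff.1 h
  exact hA.ne' (ContinuousLinearMap.opNorm_subsingleton _)

theorem sum_mulVec_sq_le (x : Fin n → ℝ) :
    ∑ i, (A *ᵥ x) i ^ 2 ≤ matSpectralNorm A ^ 2 * ∑ j, x j ^ 2 := by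
  have h := (LinearMap.toContinuousLinearMap (toEuclideanLin A)).le_opNorm (WithLp.toLp 2 x)
  have hsq : ∀ {k : ℕ} (y : Fin k → ℝ), ‖WithLp.toLp 2 y‖ ^ 2 = ∑ i, y i ^ 2 := fun y => by
    simp [EuclideanSpace.norm_sq_eq]
  rw [← hsq, ← hsq, ← mul_pow]
  exact pow_le_pow_left₀ (norm_nonneg _) h 2

theorem sum_normSq_mulVec_map_ofReal_le (z : Fin n → ℂ) :
    ∑ i, Complex.normSq ((A.map (↑) *ᵥ z) i) ≤
      matSpectralNorm A ^ 2 * ∑ j, Complex.normSq (z j) := by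
  have hre : ∀ i, ((A.map (↑) *ᵥ z) i).re = (A *ᵥ fun j => (z j).re) i := fun i => by
    simp [mulVec, dotProduct, Complex.re_sum]
  have him : ∀ i, ((A.map (↑) *ᵥ z) i).im = (A *ᵥ fun j => (z j).im) i := fun i => by
    simp [mulVec, dotProduct, Complex.im_sum]
  simp only [Complex.normSq_apply, hre, him, ← sq, Finset.sum_add_distrib, mul_add]
  exact add_le_add (sum_mulVec_sq_le A _) (sum_mulVec_sq_le A _)

theorem eq_zero_of_gaussSeidel_block {c β : ℝ} (hc : 0 ≤ c) (hβ : 1 ≤ β)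
    (hcA : c * matSpectralNorm A ≤ 2) {l : ℂ} (hl : 1 < ‖l‖ * β)
    {q₁ : Fin n → ℂ} {q₂ : Fin m → ℂ}
    (h₁ : (1 - l * β) • q₁ = (c : ℂ) • (A.map (↑))ᴴ *ᵥ q₂)
    (h₂ : (1 - l * β) • q₂ = -(l * c) • A.map (↑) *ᵥ q₁) : q₁ = 0 := by
  by_contra hq
  obtain ⟨j, hj⟩ := Function.ne_iff.1 hq
  set N := ∑ k, Complex.normSq (q₁ k)
  set E := ∑ i, Complex.normSq ((A.map (↑) *ᵥ q₁) i)
  have hN : 0 < N := Finset.sum_pos' (fun k _ => Complex.normSq_nonneg _)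
    ⟨j, Finset.mem_univ _, Complex.normSq_pos.2 hj⟩
  have hE : 0 ≤ E := Finset.sum_nonneg fun i _ => Complex.normSq_nonneg _
  have hEN : E ≤ matSpectralNorm A ^ 2 * N := sum_normSq_mulVec_map_ofReal_le A q₁
  have henergy := sq_mul_star_dotProduct_self_eq _ h₁ h₂
  rw [star_dotProduct_self_eq_sum_normSq, star_dotProduct_self_eq_sum_normSq] at henergy
  have hT4 : c ^ 2 * E / β ≤ 4 * N := by
    rw [div_le_iff₀ (by linarith)]
    calc c ^ 2 * E ≤ c ^ 2 * (matSpectralNorm A ^ 2 * N) := by gcongr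
      _ = (c * matSpectralNorm A) ^ 2 * N := by ring
      _ ≤ 2 ^ 2 * N := by gcongr; exact mul_nonneg hc (matSpectralNorm_nonneg A)
      _ ≤ 4 * N * β := by nlinarith
  have hβ0 : (β : ℂ) ≠ 0 := by exact_mod_cast (by linarith : β ≠ 0)
  have hw := norm_le_one_of_sq_mul_add_mul_eq_zero (w := l * β) hN (by positivity) hT4 (by
    push_cast
    field_simp
    linear_combination henergy)
  rw [norm_mul, Complex.norm_real, Real.norm_of_nonneg (by linarith)] at hw
  linarith

end SpectralNorm

section GaussSeidel

variable {n m : ℕ} (μ α : ℝ) (A : Matrix (Fin m) (Fin n) ℝ)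

theorem gnewLower_mul_self : GnewLower μ A * GnewLower μ A = 0 := by
  simp [GnewLower, fromBlocks_multiply]

theorem isUnit_det_gaussSeidelLeft (hα : 1 + α ≠ 0) :
    IsUnit ((1 + α) • (1 : Matrix ((Fin n ⊕ Fin m) ⊕ (Fin n ⊕ Fin m))
      ((Fin n ⊕ Fin m) ⊕ (Fin n ⊕ Fin m)) ℝ) - α • GnewLower μ A).det := by
  rw [← isUnit_iff_isUnit_det, sub_eq_add_neg]
  refine IsNilpotent.isUnit_add_left_of_commute ⟨2, ?_⟩
    (isUnit_one.smul (Units.mk0 (1 + α) hα)) ?_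
  · rw [neg_sq, sq, smul_mul_smul_comm, gnewLower_mul_self, smul_zero]
  · exact ((Commute.one_right _).smul_right _)

theorem map_gaussSeidelLeft_mulVec (p : Fin n ⊕ Fin m → ℂ) (q₁ : Fin n → ℂ) (q₂ : Fin m → ℂ) :
    (((1 + α) • 1 - α • GnewLower μ A).map (↑) : Matrix _ _ ℂ) *ᵥ Sum.elim p (Sum.elim q₁ q₂) =
      Sum.elim ((1 + α : ℂ) • p)
        (Sum.elim ((1 + α : ℂ) • q₁) ((1 + α : ℂ) • q₂ - (α / μ : ℂ) • A.map (↑) *ᵥ q₁)) := by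
  have hblocks : (((1 + α) • 1 - α • GnewLower μ A).map (↑) : Matrix _ _ ℂ) =
      fromBlocks ((1 + α : ℂ) • 1) 0 0
        (fromBlocks ((1 + α : ℂ) • 1) 0 (-(α / μ : ℂ) • A.map (↑)) ((1 + α : ℂ) • 1)) := by
    ext (i | i | i) (j | j | j) <;>
      simp [GnewLower, one_apply, apply_ite Complex.ofReal, div_eq_mul_inv, mul_assoc]
  rw [hblocks]
  simp [fromBlocks_mulVec, smul_mulVec, neg_mulVec, sub_eq_neg_add]

theorem map_gaussSeidelRight_mulVec (p : Fin n ⊕ Fin m → ℂ) (q₁ : Fin n → ℂ) (q₂ : Fin m → ℂ) :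
    ((1 + α • GnewUpper μ A).map (↑) : Matrix _ _ ℂ) *ᵥ Sum.elim p (Sum.elim q₁ q₂) =
      Sum.elim (p + (α : ℂ) • Sum.elim q₁ q₂)
        (Sum.elim (q₁ - (α / μ : ℂ) • (A.map (↑))ᴴ *ᵥ q₂) q₂) := by
  have hblocks : ((1 + α • GnewUpper μ A).map (↑) : Matrix _ _ ℂ) =
      fromBlocks 1 ((α : ℂ) • 1) 0 (fromBlocks 1 (-(α / μ : ℂ) • (A.map (↑))ᴴ) 0 1) := by
    ext (i | i | i) (j | j | j) <;>
      simp [GnewUpper, one_apply, apply_ite Complex.ofReal, div_eq_mul_inv, mul_assoc]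
  rw [hblocks]
  simp [fromBlocks_mulVec, smul_mulVec, neg_mulVec, sub_eq_add_neg]

theorem map_gaussSeidel_mulVec_elim_zero (hα : 1 + α ≠ 0) (p : Fin n ⊕ Fin m → ℂ) :
    ((1 + α • GnewUpper μ A).map (↑) : Matrix _ _ ℂ) *ᵥ Sum.elim p (Sum.elim 0 0) =
      ((1 / (1 + α) : ℝ) : ℂ) •
        ((((1 + α) • 1 - α • GnewLower μ A).map (↑) : Matrix _ _ ℂ) *ᵥ Sum.elim p (Sum.elim 0 0)) := by
  have hα' : (1 + α : ℂ) ≠ 0 := by exact_mod_cast hα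
  rw [map_gaussSeidelRight_mulVec, map_gaussSeidelLeft_mulVec]
  simp [Sum.smul_elim, smul_smul, hα']

theorem eq_zero_of_gaussSeidel_eigen (hμ : 0 < μ) (hα : 0 ≤ α)
    (hK : α * matSpectralNorm A ≤ 2 * μ) {l : ℂ} (hl : 1 < ‖l‖ * (1 + α))
    {v : (Fin n ⊕ Fin m) ⊕ (Fin n ⊕ Fin m) → ℂ}
    (hv : ((1 + α • GnewUpper μ A).map (↑) : Matrix _ _ ℂ) *ᵥ v =
      l • ((((1 + α) • 1 - α • GnewLower μ A).map (↑) : Matrix _ _ ℂ) *ᵥ v)) :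
    v = 0 := by
  rw [← Sum.elim_comp_inl_inr v, ← Sum.elim_comp_inl_inr (v ∘ Sum.inr)] at hv ⊢
  generalize v ∘ Sum.inl = p, (v ∘ Sum.inr) ∘ Sum.inl = q₁, (v ∘ Sum.inr) ∘ Sum.inr = q₂ at hv ⊢
  rw [map_gaussSeidelRight_mulVec, map_gaussSeidelLeft_mulVec, Sum.smul_elim l, Sum.elim_eq_iff,
    Sum.smul_elim l, Sum.elim_eq_iff] at hv
  obtain ⟨hp, h₁, h₂⟩ := hv
  have hw : l * ((1 + α : ℝ) : ℂ) ≠ 1 := fun h => by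
    rw [← Real.norm_of_nonneg (by linarith : 0 ≤ 1 + α), ← Complex.norm_real, ← norm_mul, h,
      norm_one] at hl
    exact hl.false
  have hq₁ : q₁ = 0 := eq_zero_of_gaussSeidel_block A (c := α / μ) (β := 1 + α) (by positivity)
    (by linarith) (by rw [div_mul_eq_mul_div, div_le_iff₀ hμ]; linarith) hl
    (by push_cast; linear_combination (norm := module) h₁)
    (by push_cast; linear_combination (norm := module) h₂)
  subst hq₁
  rw [mulVec_zero, smul_zero, sub_zero] at h₂
  have hq₂ : q₂ = 0 := eq_zero_of_eq_smul_of_ne_one hw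
    (by push_cast; linear_combination (norm := module) h₂)
  subst hq₂
  rw [Sum.elim_zero_zero, smul_zero, add_zero] at hp
  have hp : p = 0 := eq_zero_of_eq_smul_of_ne_one hw
    (by push_cast; linear_combination (norm := module) hp)
  simp [hp]

end GaussSeidel

/-- For the Gauss–Seidel splitting `Ĝ = [(1+α)I − αL]⁻¹ (I + αU)` of
`G_new = −I + L + U`, if `0 < α ≤ 2μ/‖A‖` then `ρ(Ĝ) = 1/(1+α)`. -/
theorem spectral_radius_gauss_seidel {n m : ℕ} (μ : ℝ) (hμ : 0 < μ)
    (A : Matrix (Fin m) (Fin n) ℝ) (α : ℝ)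
    (hα : 0 < α) (hα2 : α ≤ 2 * μ / matSpectralNorm A) :
    spectralRadius ℂ
        (((((1 + α) • (1 : Matrix ((Fin n ⊕ Fin m) ⊕ (Fin n ⊕ Fin m))
              ((Fin n ⊕ Fin m) ⊕ (Fin n ⊕ Fin m)) ℝ) - α • GnewLower μ A)⁻¹)
          * (1 + α • GnewUpper μ A)).map Complex.ofReal) =
      ENNReal.ofReal (1 / (1 + α)) := by
  have hA : 0 < matSpectralNorm A := (matSpectralNorm_nonneg A).lt_of_ne fun h => by
    rw [← h, div_zero] at hα2; linarith
  have hK : α * matSpectralNorm A ≤ 2 * μ := (le_div_iff₀ hA).1 hα2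
  obtain ⟨j⟩ := nonempty_of_matSpectralNorm_pos A hA
  have hM := isUnit_det_gaussSeidelLeft μ α A (by positivity)
  refine Matrix.spectralRadius_eq_of_eigenvectors _ (by positivity) (fun l v hv hl => ?_)
    (v := Sum.elim (Pi.single (Sum.inl j) 1) (Sum.elim 0 0)) ?_ ?_
  · exact eq_zero_of_gaussSeidel_eigen μ α A hμ hα.le hK
      (by rwa [one_div, inv_lt_iff_one_lt_mul₀ (by linarith)] at hl)
      ((Matrix.map_nonsing_inv_mul_mulVec_eq_smul_iff Complex.ofRealHom hM _ _ _).1 hv)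
  · exact fun h => by simpa using congrFun h (Sum.inl (Sum.inl j))
  · exact (Matrix.map_nonsing_inv_mul_mulVec_eq_smul_iff Complex.ofRealHom hM _ _ _).2
      (map_gaussSeidel_mulVec_elim_zero μ α A (by positivity) _)
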